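/- arXiv:1807.08184 — 3 statements merged into one kernel-verified Lean document; each statement's English description precedes it below -/
import Mathlib

section
/- If ψ is continuous on [0,π] and has a 3-Schoenberg expansion with nonnegative summable coefficients (b_{n,3}) summing to 1, then its 1-Schoenberg coefficient b_{0,1} = (1/π)∫_0^π ψ(θ)dθ satisfies b_{0,1} = Σ_{j=0}^∞ b_{2j,3}/(2j+1). -/
/-!
Since `|U_n(cos θ)| ≤ U_n(1) = n + 1`, the expansion of `ψ` is dominated by `∑ b_n` and can be
integrated term by term. From `U_{n+2} = 2 T_{n+2} + U_n` and `T_k(cos θ) = cos kθ`, the integral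
`∫_0^π U_n(cos θ) dθ` equals `π` for even `n` and `0` for odd `n`, so only the even terms survive,
each contributing `π b_n / (n + 1)`.
-/

open Real Polynomial Polynomial.Chebyshev Set intervalIntegral

lemma eval_U_add_two {R : Type*} [CommRing R] (n : ℕ) (x : R) :
    (U R (n + 2 : ℕ)).eval x = 2 * (T R (n + 2 : ℕ)).eval x + (U R n).eval x := by
  simpa using congrArg (eval x) (U_eq_two_mul_T_add_U R n)

lemma abs_eval_U_real_le (n : ℕ) {x : ℝ} (hx : |x| ≤ 1) : |(U ℝ n).eval x| ≤ n + 1 := by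
  induction n using Nat.twoStepInduction with
  | zero => simp
  | one =>
    simp only [Nat.cast_one, U_one, eval_mul, eval_ofNat, eval_X, abs_mul, Nat.abs_ofNat]
    linarith
  | more n ih _ =>
    rw [eval_U_add_two]
    have hT := abs_eval_T_real_le_one (n + 2 : ℕ) hx
    calc _ ≤ |2 * (T ℝ (n + 2 : ℕ)).eval x| + |(U ℝ n).eval x| := abs_add_le _ _
      _ ≤ 2 * 1 + (n + 1) := by rw [abs_mul, abs_two]; gcongr
      _ = ((n + 2 : ℕ) : ℝ) + 1 := by push_cast; ring

lemma abs_eval_U_real_div_eval_one_le (n : ℕ) {x : ℝ} (hx : |x| ≤ 1) :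
    |(U ℝ n).eval x / (U ℝ n).eval 1| ≤ 1 := by
  have hpos : (0 : ℝ) < n + 1 := by positivity
  rw [U_eval_one, Int.cast_natCast, abs_div, abs_of_pos hpos, div_le_one hpos]
  exact abs_eval_U_real_le n hx

lemma integral_eval_T_real_cos {n : ℤ} (hn : n ≠ 0) :
    ∫ θ in 0..π, (T ℝ n).eval (cos θ) = 0 := by
  rw [← integral_measureT_eq_integral_cos (f := fun x ↦ (T ℝ n).eval x),
    integral_eval_T_real_measureT_of_ne_zero hn]

lemma integral_eval_U_real_cos (n : ℕ) :
    ∫ θ in 0..π, (U ℝ n).eval (cos θ) = if Even n then π else 0 := by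
  induction n using Nat.twoStepInduction with
  | zero => simp
  | one => simp
  | more n ih _ =>
    simp_rw [eval_U_add_two]
    rw [integral_add (by apply Continuous.intervalIntegrable; fun_prop)
      (by apply Continuous.intervalIntegrable; fun_prop), integral_const_mul,
      integral_eval_T_real_cos (by omega), ih]
    simp [Nat.even_add]

lemma integral_eval_U_real_cos_div_eval_one (n : ℕ) :
    ∫ θ in 0..π, (U ℝ n).eval (cos θ) / (U ℝ n).eval 1 = if Even n then π / (n + 1) else 0 := by
  rw [integral_div, integral_eval_U_real_cos, U_eval_one]
  split_ifs <;> simp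

lemma hasSum_intervalIntegral_of_norm_le {E : Type*} [NormedAddCommGroup E] [NormedSpace ℝ E]
    [CompleteSpace E] {a b : ℝ} {F : ℕ → ℝ → E} {f : ℝ → E} {c : ℕ → ℝ}
    (hF : ∀ n, Continuous (F n)) (hc : Summable c) (hFc : ∀ n x, ‖F n x‖ ≤ c n)
    (hf : ∀ x ∈ uIcc a b, f x = ∑' n, F n x) :
    HasSum (fun n ↦ ∫ x in a..b, F n x) (∫ x in a..b, f x) := by
  refine hasSum_integral_of_dominated_convergence (fun n _ ↦ c n)
    (fun n ↦ (hF n).aestronglyMeasurable) (fun n ↦ .of_forall fun x _ ↦ hFc n x)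
    (.of_forall fun _ _ ↦ hc) intervalIntegrable_const (.of_forall fun x hx ↦ ?_)
  rw [hf x (uIoc_subset_uIcc hx)]
  exact (hc.of_norm_bounded (hFc · x)).hasSum

lemma hasSum_comp_two_mul_iff {M : Type*} [AddCommMonoid M] [TopologicalSpace M] {f : ℕ → M}
    {a : M} (hf : ∀ n, Odd n → f n = 0) : HasSum (fun j ↦ f (2 * j)) a ↔ HasSum f a :=
  (mul_right_injective₀ two_ne_zero).hasSum_iff fun n hn ↦
    hf n (Nat.not_even_iff_odd.1 fun ⟨j, hj⟩ ↦ hn ⟨j, show 2 * j = n by omega⟩)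

theorem schoenberg_b01_from_dim3_general
    (ψ : ℝ → ℝ) (b : ℕ → ℝ)
    (hb : ∀ n, 0 ≤ b n) (hsum : HasSum b 1)
    (hexp : ∀ θ ∈ Set.Icc (0 : ℝ) π,
      ψ θ = ∑' n : ℕ, b n * (Polynomial.Chebyshev.U ℝ (n : ℤ)).eval (Real.cos θ)
        / (Polynomial.Chebyshev.U ℝ (n : ℤ)).eval 1) :
    HasSum (fun j : ℕ => b (2 * j) / (2 * (j : ℝ) + 1))
      ((1 / π) * ∫ θ in (0 : ℝ)..π, ψ θ) := by
  have hterm : HasSum (fun n ↦ ∫ θ in 0..π, b n * (U ℝ n).eval (cos θ) / (U ℝ n).eval 1)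
      (∫ θ in 0..π, ψ θ) := by
    refine hasSum_intervalIntegral_of_norm_le (fun n ↦ by fun_prop) hsum.summable (fun n θ ↦ ?_)
      (by rwa [uIcc_of_le pi_pos.le])
    rw [norm_eq_abs, mul_div_assoc, abs_mul, abs_of_nonneg (hb n)]
    exact mul_le_of_le_one_right (hb n) (abs_eval_U_real_div_eval_one_le n (abs_cos_le_one θ))
  simp_rw [mul_div_assoc, integral_const_mul, integral_eval_U_real_cos_div_eval_one] at hterm
  have heven := (hasSum_comp_two_mul_iff fun n hn ↦ by simp [Nat.not_even_iff_odd.2 hn]).2 hterm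
  simp only [even_two_mul, if_true, Nat.cast_mul, Nat.cast_ofNat] at heven
  have hcoeff : (fun j : ℕ ↦ b (2 * j) / (2 * (j : ℝ) + 1))
      = fun j ↦ 1 / π * (b (2 * j) * (π / (2 * j + 1))) := by
    ext j
    field_simp
  exact hcoeff ▸ heven.mul_left (1 / π)

theorem schoenberg_b01_from_dim3
    (ψ : ℝ → ℝ) (b : ℕ → ℝ)
    (hψ : ContinuousOn ψ (Set.Icc 0 π))
    (hb : ∀ n, 0 ≤ b n) (hsum : HasSum b 1)
    (hexp : ∀ θ ∈ Set.Icc (0 : ℝ) π,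
      ψ θ = ∑' n : ℕ, b n * (Polynomial.Chebyshev.U ℝ (n : ℤ)).eval (Real.cos θ)
        / (Polynomial.Chebyshev.U ℝ (n : ℤ)).eval 1) :
    HasSum (fun j : ℕ => b (2 * j) / (2 * (j : ℝ) + 1))
      ((1 / π) * ∫ θ in (0 : ℝ)..π, ψ θ) :=
  schoenberg_b01_from_dim3_general ψ b hb hsum hexp
end

section
/- For integers q ≥ 2, m, n ≥ 0, define w^{q−2}_{m,n} = (m+n+q−2)·m·(n+1)/((m+q−2)(n+q−1)(m+n+q)). Then for all k ≥ 0, Π_{j=0}^k w^{q−2}_{m+j,n+j} ≤ exp(−Σ_{j=0}^k ((q−2)/(m+j+q−2) + (q−2)/(n+j+q−1) + 2/(m+n+2j+q))), and consequently Π_{j=0}^∞ w^{q−2}_{m+j,n+j} = 0. -/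
/-!
Each factor `w^{q-2}_{M,N}` splits as a product of three ratios `A / (A + d)` with `A, d ≥ 0`,
and `A / (A + d) = 1 - d / (A + d) ≤ exp (-(d / (A + d)))`. Multiplying these bounds gives the
exponential estimate; its exponent contains the term `2 / (m + n + 2j + q) = 1 / (j + (m+n+q)/2)`
of a shifted harmonic series, so it diverges and the product tends to `0`.
-/

open Filter

/-- `w^{q-2}_{m,n} = (m+n+q-2)·m·(n+1)/((m+q-2)(n+q-1)(m+n+q))`. -/
noncomputable def wC (q m n : ℕ) : ℝ :=
  ((m : ℝ) + n + q - 2) * m * ((n : ℝ) + 1)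
    / (((m : ℝ) + q - 2) * ((n : ℝ) + q - 1) * ((m : ℝ) + n + q))

lemma div_add_le_exp_neg_div {A d : ℝ} (hA : 0 ≤ A) (hd : 0 ≤ d) :
    A / (A + d) ≤ Real.exp (-(d / (A + d))) := by
  rcases (add_nonneg hA hd).eq_or_lt with h | h
  · rw [← h, div_zero]
    exact (Real.exp_pos _).le
  · calc A / (A + d) = -(d / (A + d)) + 1 := by field_simp; ring
      _ ≤ Real.exp (-(d / (A + d))) := Real.add_one_le_exp _

lemma Real.not_summable_one_div_nat_add (a : ℝ) : ¬Summable fun n : ℕ => 1 / ((n : ℝ) + a) := by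
  rw [← summable_abs_iff]
  simpa [abs_div] using (Real.summable_one_div_nat_add_rpow a 1).not.mpr (lt_irrefl 1)

lemma prod_le_exp_neg_sum {ι : Type*} (s : Finset ι) {a t : ι → ℝ} (ha : ∀ i, 0 ≤ a i)
    (hat : ∀ i, a i ≤ Real.exp (-t i)) : ∏ i ∈ s, a i ≤ Real.exp (-∑ i ∈ s, t i) := by
  rw [← Finset.sum_neg_distrib, Real.exp_sum]
  exact Finset.prod_le_prod (fun i _ => ha i) (fun i _ => hat i)

lemma tendsto_prod_range_zero_of_le_exp_neg {a t : ℕ → ℝ} (ha : ∀ i, 0 ≤ a i)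
    (hat : ∀ i, a i ≤ Real.exp (-t i)) (ht : ∀ i, 0 ≤ t i) (ht_div : ¬Summable t) :
    Tendsto (fun k => ∏ i ∈ Finset.range k, a i) atTop (nhds 0) := by
  have hsum : Tendsto (fun k => ∑ i ∈ Finset.range k, t i) atTop atTop :=
    (not_summable_iff_tendsto_nat_atTop_of_nonneg ht).mp ht_div
  exact squeeze_zero (fun k => Finset.prod_nonneg fun i _ => ha i)
    (fun k => prod_le_exp_neg_sum _ ha hat)
    (Real.tendsto_exp_atBot.comp (tendsto_neg_atTop_atBot.comp hsum))

lemma wC_eq_mul (q M N : ℕ) :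
    wC q M N = (M : ℝ) / (M + ((q : ℝ) - 2)) * (((N : ℝ) + 1) / ((N + 1) + ((q : ℝ) - 2)))
      * (((M : ℝ) + N + q - 2) / ((M + N + q - 2) + 2)) := by
  rw [wC, div_mul_div_comm, div_mul_div_comm]
  congr 1 <;> ring

lemma wC_nonneg {q : ℕ} (hq : 2 ≤ q) (M N : ℕ) : 0 ≤ wC q M N := by
  have hq' : (0 : ℝ) ≤ q - 2 := by rw [sub_nonneg]; exact_mod_cast hq
  rw [wC_eq_mul]
  have hMN : (0 : ℝ) ≤ M + N + q - 2 := by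
    linarith [(M.cast_nonneg : (0 : ℝ) ≤ M), (N.cast_nonneg : (0 : ℝ) ≤ N)]
  positivity

lemma wC_le_exp {q : ℕ} (hq : 2 ≤ q) (M N : ℕ) :
    wC q M N ≤ Real.exp (-(((q : ℝ) - 2) / ((M : ℝ) + q - 2)
      + ((q : ℝ) - 2) / ((N : ℝ) + q - 1) + 2 / ((M : ℝ) + N + q))) := by
  have hq' : (0 : ℝ) ≤ q - 2 := by rw [sub_nonneg]; exact_mod_cast hq
  have hM : (0 : ℝ) ≤ M := M.cast_nonneg
  have hN : (0 : ℝ) ≤ N + 1 := by positivity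
  have hMN : (0 : ℝ) ≤ M + N + q - 2 := by linarith [(N.cast_nonneg : (0 : ℝ) ≤ N)]
  have h₁ := div_add_le_exp_neg_div hM hq'
  have h₂ := div_add_le_exp_neg_div hN hq'
  have h₃ := div_add_le_exp_neg_div hMN zero_le_two
  rw [wC_eq_mul]
  calc _ ≤ Real.exp (-(((q : ℝ) - 2) / (M + ((q : ℝ) - 2))))
        * Real.exp (-(((q : ℝ) - 2) / ((N + 1) + ((q : ℝ) - 2))))
        * Real.exp (-(2 / ((M + N + q - 2) + 2))) := by gcongr
    _ = _ := by rw [← Real.exp_add, ← Real.exp_add]; congr 1; ring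

theorem product_w_bound_and_vanishing (q m n : ℕ) (hq : 2 ≤ q) :
    (∀ k : ℕ,
      ∏ j ∈ Finset.range (k + 1), wC q (m + j) (n + j)
        ≤ Real.exp (-(∑ j ∈ Finset.range (k + 1),
            (((q : ℝ) - 2) / ((m : ℝ) + j + q - 2)
              + ((q : ℝ) - 2) / ((n : ℝ) + j + q - 1)
              + 2 / ((m : ℝ) + n + 2 * j + q))))) ∧
    Tendsto (fun k : ℕ => ∏ j ∈ Finset.range (k + 1), wC q (m + j) (n + j))
      atTop (nhds 0) := by
  have hq' : (0 : ℝ) ≤ q - 2 := by rw [sub_nonneg]; exact_mod_cast hq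
  set t : ℕ → ℝ := fun j => ((q : ℝ) - 2) / ((m : ℝ) + j + q - 2)
    + ((q : ℝ) - 2) / ((n : ℝ) + j + q - 1) + 2 / ((m : ℝ) + n + 2 * j + q)
  have hw : ∀ j, wC q (m + j) (n + j) ≤ Real.exp (-t j) := fun j =>
    (wC_le_exp hq _ _).trans_eq (by push_cast; congr 1; ring)
  have hharmonic : ∀ j : ℕ, 1 / ((j : ℝ) + ((m : ℝ) + n + q) / 2) ≤ t j := fun j => by
    have hm : (0 : ℝ) ≤ ((q : ℝ) - 2) / ((m : ℝ) + j + q - 2) := by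
      apply div_nonneg hq'; linarith [(m.cast_nonneg : (0 : ℝ) ≤ m)]
    have hn : (0 : ℝ) ≤ ((q : ℝ) - 2) / ((n : ℝ) + j + q - 1) := by
      apply div_nonneg hq'; linarith [(n.cast_nonneg : (0 : ℝ) ≤ n)]
    have hshift : 1 / ((j : ℝ) + ((m : ℝ) + n + q) / 2) = 2 / ((m : ℝ) + n + 2 * j + q) := by
      field_simp; ring
    linarith
  have ht : ∀ j, 0 ≤ t j := fun j => (by positivity : (0 : ℝ) ≤ 1 / _).trans (hharmonic j)
  have ht_div : ¬Summable t := fun h =>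
    Real.not_summable_one_div_nat_add _ (h.of_nonneg_of_le (fun j => by positivity) hharmonic)
  exact ⟨fun k => prod_le_exp_neg_sum _ (fun j => wC_nonneg hq _ _) hw,
    (tendsto_prod_range_zero_of_le_exp_neg (fun j => wC_nonneg hq _ _) hw ht ht_div).comp
      (tendsto_add_atTop_nat 1)⟩
end

section
/- Assume the recursion a^{q−1}_{m−1,n} = ((m+q−2)(n+q−1)/((q−1)(m+n+q−2)))·a^{q−2}_{m−1,n} − (m(n+1)/((q−1)(m+n+q)))·a^{q−2}_{m,n+1} holds for the Schoenberg coefficients of φ ∈ Υ_{2(q+1)} (q ≥ 2), for all m ≥ 1, n ≥ 0, where a^{α}_{m,n} ≥ 0. Then a^{q−2}_{m,n} > 0 if and only if there exists j ≥ 0 with a^{q−1}_{m+j,n+j} > 0. -/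
/-!
Along a diagonal, the recursion reads `A m n = c * a m n - d * a (m+1) (n+1)` with
`0 < d ≤ c`. Since `A ≥ 0`, positivity of `a` propagates down the diagonal, and `A m n > 0`
forces `a m n > 0`. Conversely, if `A` vanishes on the whole diagonal then `a` is
nondecreasing along it, which is incompatible with summability unless `a m n = 0`.
-/

open Filter Topology

lemma schoenberg_coeffs_bounds {q x y : ℝ} (hq : 2 ≤ q) (hx : 1 ≤ x) (hy : 0 ≤ y) :
    0 < x * (y + 1) / ((q - 1) * (x + y + q)) ∧
      x * (y + 1) / ((q - 1) * (x + y + q))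
        ≤ (x + q - 2) * (y + q - 1) / ((q - 1) * (x + y + q - 2)) := by
  have hq1 : 0 < q - 1 := by linarith
  refine ⟨div_pos (by positivity) (mul_pos hq1 (by linarith)), ?_⟩
  apply div_le_div₀
  · exact mul_nonneg (by linarith) (by linarith)
  · exact mul_le_mul (by linarith) (by linarith) (by linarith) (by linarith)
  · exact mul_pos hq1 (by linarith)
  · exact mul_le_mul_of_nonneg_left (by linarith) hq1.le

section DiagonalRecursion

variable {x y : ℕ → ℝ}
  (hrec : ∀ j, ∃ c d : ℝ, 0 < d ∧ d ≤ c ∧ y j = c * x j - d * x (j + 1))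
include hrec

lemma pos_of_succ_pos (hy : ∀ j, 0 ≤ y j) {j : ℕ} (hj : 0 < x (j + 1)) : 0 < x j := by
  obtain ⟨c, d, hd, hdc, hyj⟩ := hrec j
  nlinarith [hy j, mul_pos hd hj]

lemma pos_of_recursion_pos (hx : ∀ j, 0 ≤ x j) {j : ℕ} (hj : 0 < y j) : 0 < x j := by
  obtain ⟨c, d, hd, hdc, hyj⟩ := hrec j
  nlinarith [mul_nonneg hd.le (hx (j + 1))]

lemma le_succ_of_recursion_eq_zero {j : ℕ} (hxj : 0 ≤ x j) (hyj : y j = 0) : x j ≤ x (j + 1) := by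
  obtain ⟨c, d, hd, hdc, hyj'⟩ := hrec j
  nlinarith

lemma pos_zero_iff_exists_recursion_pos (hx : ∀ j, 0 ≤ x j) (hy : ∀ j, 0 ≤ y j)
    (hlim : Tendsto x atTop (𝓝 0)) : 0 < x 0 ↔ ∃ j, 0 < y j := by
  constructor
  · intro hx0
    by_contra! hy0
    have hmono : Monotone x := monotone_nat_of_le_succ fun j =>
      le_succ_of_recursion_eq_zero hrec (hx j) (le_antisymm (hy0 j) (hy j))
    have : x 0 ≤ 0 := ge_of_tendsto' hlim fun j => hmono j.zero_le
    linarith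
  · rintro ⟨j, hj⟩
    have hdown : ∀ i, 0 < x i → 0 < x 0 := by
      intro i
      induction i with
      | zero => exact id
      | succ i ih => exact fun hi => ih (pos_of_succ_pos hrec hy hi)
    exact hdown j (pos_of_recursion_pos hrec hx hj)

end DiagonalRecursion

lemma exists_coeffs_of_schoenberg_recursion (q : ℕ) (hq : 2 ≤ q) (a A : ℕ → ℕ → ℝ)
    (hrec : ∀ m n : ℕ, 1 ≤ m →
      A (m - 1) n
        = (((m : ℝ) + q - 2) * ((n : ℝ) + q - 1) / (((q : ℝ) - 1) * ((m : ℝ) + n + q - 2)))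
            * a (m - 1) n
          - ((m : ℝ) * ((n : ℝ) + 1) / (((q : ℝ) - 1) * ((m : ℝ) + n + q))) * a m (n + 1))
    (m n : ℕ) : ∃ c d : ℝ, 0 < d ∧ d ≤ c ∧ A m n = c * a m n - d * a (m + 1) (n + 1) := by
  obtain ⟨hd, hdc⟩ := schoenberg_coeffs_bounds (q := q) (x := ((m + 1 : ℕ) : ℝ)) (y := n)
    (by exact_mod_cast hq) (by simp) n.cast_nonneg
  exact ⟨_, _, hd, hdc, hrec (m + 1) n m.succ_pos⟩

theorem schoenberg_support_transfer
    (q : ℕ) (hq : 2 ≤ q) (a A : ℕ → ℕ → ℝ)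
    (ha : ∀ m n, 0 ≤ a m n) (hA : ∀ m n, 0 ≤ A m n)
    (hsum : Summable (fun p : ℕ × ℕ => a p.1 p.2))
    (hrec : ∀ m n : ℕ, 1 ≤ m →
      A (m - 1) n
        = (((m : ℝ) + q - 2) * ((n : ℝ) + q - 1) / (((q : ℝ) - 1) * ((m : ℝ) + n + q - 2)))
            * a (m - 1) n
          - ((m : ℝ) * ((n : ℝ) + 1) / (((q : ℝ) - 1) * ((m : ℝ) + n + q))) * a m (n + 1)) :
    ∀ m n : ℕ, 0 < a m n ↔ ∃ j : ℕ, 0 < A (m + j) (n + j) := by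
  intro m n
  have hdiag : Summable fun j => a (m + j) (n + j) :=
    hsum.comp_injective (i := fun j => (m + j, n + j)) fun i j hij =>
      Nat.add_left_cancel (Prod.ext_iff.mp hij).1
  exact pos_zero_iff_exists_recursion_pos
    (fun j => exists_coeffs_of_schoenberg_recursion q hq a A hrec (m + j) (n + j))
    (fun j => ha _ _) (fun j => hA _ _) hdiag.tendsto_atTop_zero
end
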